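/- arXiv:2206.05674 — 3 statements merged into one kernel-verified Lean document; each statement's English description precedes it below -/
import Mathlib

section
/- For every closed interval [x, x+ℓ] ⊂ ℝ with 0 < ℓ, there exist a ∈ {0,1,2}, k ∈ ℤ and m ∈ ℤ such that [x, x+ℓ] ⊆ [2^{-k}(m + a/3), 2^{-k}(m + a/3 + 1)) and 2^{-k} ≤ 6ℓ. -/
/-! Choose a power of two `L = 2 ^ n` with `3 ℓ < L ≤ 6 ℓ`. The points `j L / 3` cut the line into
pieces of length `L / 3 > ℓ`, so `[x, x + ℓ]` meets at most two consecutive pieces and lies in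
`[j L / 3, j L / 3 + L)` for `j = ⌊3 x / L⌋`. Writing `j = 3 m + a` with `a ∈ {0, 1, 2}` exhibits
this as an interval of the grid shifted by `a / 3`. -/

open Set

lemma exists_zpow_two_mem_Ioc {r : ℝ} (hr : 0 < r) : ∃ n : ℤ, r / 2 < 2 ^ n ∧ (2 : ℝ) ^ n ≤ r := by
  refine ⟨Int.log 2 r, ?_, Int.zpow_log_le_self (by norm_num) hr⟩
  have h := Int.lt_zpow_succ_log_self (by norm_num : 1 < 2) r
  rw [zpow_add_one₀ (by norm_num), Nat.cast_ofNat] at h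
  linarith

lemma Icc_subset_Ico_floor_div_mul {x ℓ δ : ℝ} (hδ : 0 < δ) (hℓ : ℓ < δ) :
    Icc x (x + ℓ) ⊆ Ico (⌊x / δ⌋ * δ) ((⌊x / δ⌋ + 2) * δ) := by
  have hlo : (⌊x / δ⌋ : ℝ) * δ ≤ x := (le_div_iff₀ hδ).1 (Int.floor_le _)
  have hhi : x < (⌊x / δ⌋ + 1) * δ := (div_lt_iff₀ hδ).1 (Int.lt_floor_add_one _)
  rintro y ⟨hxy, hyx⟩
  constructor <;> linarith

lemma Int.cast_ediv_add_toNat_emod_div (j : ℤ) {b : ℤ} (hb : b ≠ 0) :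
    ((j / b : ℤ) : ℝ) + ((j % b).toNat : ℝ) / b = j / b := by
  have hcast : ((j % b).toNat : ℝ) = ((j % b : ℤ) : ℝ) := by
    exact_mod_cast Int.toNat_of_nonneg (Int.emod_nonneg j hb)
  have hdiv : (b : ℝ) * ((j / b : ℤ) : ℝ) + ((j % b : ℤ) : ℝ) = j := by
    exact_mod_cast Int.mul_ediv_add_emod j b
  rw [hcast, ← hdiv]
  field_simp

theorem stmt0 (x ℓ : ℝ) (hℓ : 0 < ℓ) :
    ∃ a : ℕ, a ≤ 2 ∧ ∃ k m : ℤ,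
      Set.Icc x (x + ℓ) ⊆
        Set.Ico ((2:ℝ) ^ (-k) * ((m : ℝ) + (a : ℝ) / 3))
          ((2:ℝ) ^ (-k) * ((m : ℝ) + (a : ℝ) / 3 + 1)) ∧
      (2:ℝ) ^ (-k) ≤ 6 * ℓ := by
  obtain ⟨n, hn_gt, hn_le⟩ := exists_zpow_two_mem_Ioc (by positivity : 0 < 6 * ℓ)
  set δ : ℝ := 2 ^ n / 3 with hδ_def
  have hδ : 0 < δ := by positivity
  have hℓδ : ℓ < δ := by rw [hδ_def]; linarith
  set j := ⌊x / δ⌋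
  refine ⟨(j % 3).toNat, by omega, -n, j / 3, ?_, by simpa using hn_le⟩
  have hj := Int.cast_ediv_add_toNat_emod_div j (b := 3) (by norm_num)
  push_cast at hj
  rw [neg_neg, hj]
  refine (Icc_subset_Ico_floor_div_mul hδ hℓδ).trans (Ico_subset_Ico ?_ ?_)
  · exact le_of_eq (by ring)
  · calc ((j : ℝ) + 2) * δ ≤ (j + 3) * δ := by gcongr; norm_num
      _ = 2 ^ n * (j / 3 + 1) := by ring
end

section
/- Let (X, μ) be a measure space and T a map sending measurable functions f : X → ℂ to measurable functions Tf : X → [0, ∞], satisfying (a) T(|f|^u) = (Tf)^u pointwise for every u > 0, and (b) ∫ (Tf)^p dμ ≤ (p/(p-1))^p ∫ |f|^p dμ for every p > 1 and every measurable f. Then ∫ Tf dμ ≤ e ∫ |f| dμ for every measurable f. -/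
/-!
Applying the `L^p` bound to `|f|^{1/p}` and using the homogeneity `T(|g|^p) = (Tg)^p` gives
`∫ Tf ≤ (p/(p-1))^p ∫ |f|` for every `p > 1`; since `(p/(p-1))^p → e` as `p → ∞`, the bound
with constant `e` follows.
-/

open scoped ENNReal NNReal

open Filter Topology MeasureTheory

lemma Real.tendsto_one_add_inv_rpow_add_one_exp :
    Tendsto (fun q : ℝ => (1 + q⁻¹) ^ (q + 1)) atTop (𝓝 (Real.exp 1)) := by
  have hpow : Tendsto (fun q : ℝ => (1 + q⁻¹) ^ q) atTop (𝓝 (Real.exp 1)) := by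
    simpa [one_div] using Real.tendsto_one_add_div_rpow_exp 1
  have hbase : Tendsto (fun q : ℝ => 1 + q⁻¹) atTop (𝓝 1) := by
    simpa using tendsto_inv_atTop_zero.const_add (1 : ℝ)
  have hprod : Tendsto (fun q : ℝ => (1 + q⁻¹) ^ q * (1 + q⁻¹)) atTop (𝓝 (Real.exp 1)) := by
    simpa using hpow.mul hbase
  refine hprod.congr' ?_
  filter_upwards [eventually_gt_atTop (0 : ℝ)] with q hq
  rw [Real.rpow_add (by positivity), Real.rpow_one]

lemma Real.tendsto_div_sub_one_rpow_exp :
    Tendsto (fun p : ℝ => (p / (p - 1)) ^ p) atTop (𝓝 (Real.exp 1)) := by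
  refine (Real.tendsto_one_add_inv_rpow_add_one_exp.comp
    (tendsto_atTop_add_const_right _ (-1) tendsto_id)).congr' ?_
  filter_upwards [eventually_gt_atTop (1 : ℝ)] with p hp
  have hp1 : p - 1 ≠ 0 := sub_ne_zero.mpr hp.ne'
  simp only [Function.comp_apply, id, ← sub_eq_add_neg, sub_add_cancel]
  congr 1
  field_simp
  ring

lemma enorm_ofReal_norm_rpow_inv_rpow {E : Type*} [SeminormedAddGroup E] (z : E) {p : ℝ}
    (hp : 0 < p) : (‖((‖z‖ ^ p⁻¹ : ℝ) : ℂ)‖₊ : ℝ≥0∞) ^ p = ‖z‖₊ := by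
  have hnorm : ‖((‖z‖ ^ p⁻¹ : ℝ) : ℂ)‖₊ = ‖z‖₊ ^ p⁻¹ := by
    ext
    simp [abs_of_nonneg (Real.rpow_nonneg (norm_nonneg z) _)]
  rw [hnorm, ENNReal.coe_rpow_of_nonneg _ (by positivity), ← ENNReal.rpow_mul,
    inv_mul_cancel₀ hp.ne', ENNReal.rpow_one]

section RpowHomogeneous

variable {X : Type*} [MeasurableSpace X] {T : (X → ℂ) → X → ℝ≥0∞}

lemma apply_eq_apply_norm_rpow_inv_rpow
    (ha : ∀ u : ℝ, 0 < u → ∀ f : X → ℂ, Measurable f →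
      T (fun x => ((‖f x‖ ^ u : ℝ) : ℂ)) = fun x => (T f x) ^ u)
    {f : X → ℂ} (hf : Measurable f) {p : ℝ} (hp : 0 < p) :
    T f = fun x => T (fun x => ((‖f x‖ ^ p⁻¹ : ℝ) : ℂ)) x ^ p := by
  have hg : Measurable fun x => ((‖f x‖ ^ p⁻¹ : ℝ) : ℂ) :=
    Complex.measurable_ofReal.comp (hf.norm.pow_const _)
  have hnorm : (fun x => ((‖((‖f x‖ ^ p⁻¹ : ℝ) : ℂ)‖ ^ p : ℝ) : ℂ)) =
      fun x => ((‖f x‖ ^ (1 : ℝ) : ℝ) : ℂ) := by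
    funext x
    rw [Complex.norm_real, Real.norm_of_nonneg (by positivity), ← Real.rpow_mul (norm_nonneg _),
      inv_mul_cancel₀ hp.ne']
  rw [← ha p hp _ hg, hnorm, ha 1 one_pos f hf]
  simp only [ENNReal.rpow_one]

lemma lintegral_le_mul_lintegral_enorm_of_rpow_homogeneous (μ : Measure X)
    (ha : ∀ u : ℝ, 0 < u → ∀ f : X → ℂ, Measurable f →
      T (fun x => ((‖f x‖ ^ u : ℝ) : ℂ)) = fun x => (T f x) ^ u)
    {p : ℝ} (hp : 0 < p) {C : ℝ≥0∞}
    (hb : ∀ g : X → ℂ, Measurable g →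
      ∫⁻ x, (T g x) ^ p ∂μ ≤ C * ∫⁻ x, ((‖g x‖₊ : ℝ≥0∞)) ^ p ∂μ)
    {f : X → ℂ} (hf : Measurable f) :
    ∫⁻ x, T f x ∂μ ≤ C * ∫⁻ x, (‖f x‖₊ : ℝ≥0∞) ∂μ := by
  have hg : Measurable fun x => ((‖f x‖ ^ p⁻¹ : ℝ) : ℂ) :=
    Complex.measurable_ofReal.comp (hf.norm.pow_const _)
  calc ∫⁻ x, T f x ∂μ = ∫⁻ x, T (fun x => ((‖f x‖ ^ p⁻¹ : ℝ) : ℂ)) x ^ p ∂μ := by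
        rw [← apply_eq_apply_norm_rpow_inv_rpow ha hf hp]
    _ ≤ C * ∫⁻ x, (‖((‖f x‖ ^ p⁻¹ : ℝ) : ℂ)‖₊ : ℝ≥0∞) ^ p ∂μ := hb _ hg
    _ = C * ∫⁻ x, (‖f x‖₊ : ℝ≥0∞) ∂μ := by
        simp only [enorm_ofReal_norm_rpow_inv_rpow _ hp]

end RpowHomogeneous

theorem stmt7 {X : Type*} [MeasurableSpace X] (μ : MeasureTheory.Measure X)
    (T : (X → ℂ) → X → ℝ≥0∞)
    (ha : ∀ u : ℝ, 0 < u → ∀ f : X → ℂ, Measurable f →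
      T (fun x => ((‖f x‖ ^ u : ℝ) : ℂ)) = fun x => (T f x) ^ u)
    (hb : ∀ p : ℝ, 1 < p → ∀ f : X → ℂ, Measurable f →
      ∫⁻ x, (T f x) ^ p ∂μ ≤
        ENNReal.ofReal ((p / (p - 1)) ^ p) * ∫⁻ x, ((‖f x‖₊ : ℝ≥0∞)) ^ p ∂μ) :
    ∀ f : X → ℂ, Measurable f →
      ∫⁻ x, T f x ∂μ ≤ ENNReal.ofReal (Real.exp 1) * ∫⁻ x, (‖f x‖₊ : ℝ≥0∞) ∂μ := by
  intro f hf
  have hbound : ∀ p : ℝ, 1 < p → ∫⁻ x, T f x ∂μ ≤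
      ENNReal.ofReal ((p / (p - 1)) ^ p) * ∫⁻ x, (‖f x‖₊ : ℝ≥0∞) ∂μ := fun p hp =>
    lintegral_le_mul_lintegral_enorm_of_rpow_homogeneous μ ha (zero_lt_one.trans hp)
      (hb p hp) hf
  have hlim : Tendsto (fun p : ℝ => ENNReal.ofReal ((p / (p - 1)) ^ p) *
      ∫⁻ x, (‖f x‖₊ : ℝ≥0∞) ∂μ) atTop
      (𝓝 (ENNReal.ofReal (Real.exp 1) * ∫⁻ x, (‖f x‖₊ : ℝ≥0∞) ∂μ)) :=
    ENNReal.Tendsto.mul_const (ENNReal.tendsto_ofReal Real.tendsto_div_sub_one_rpow_exp)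
      (Or.inl (ENNReal.ofReal_pos.mpr (Real.exp_pos 1)).ne')
  exact ge_of_tendsto hlim ((eventually_gt_atTop 1).mono hbound)
end

section
/- Let L ∈ ℕ, let x₀ ∈ ℝⁿ, and let φ ∈ C^{L+1}(ℝⁿ) with ‖∂^α φ‖_∞ ≤ 1 for all multi-indices α with |α| = L + 1. Let a ∈ L¹(ℝⁿ) satisfy ∫ a(y) (y - x₀)^β dy = 0 for every multi-index β with |β| ≤ L, and assume ∫ |a(y)| ‖y - x₀‖^{L+1} dy < ∞. Then there is a constant C depending only on n and L such that for every t > 0 and every x ∈ ℝⁿ: | t^{-n} ∫ a(y) φ((x - y)/t) dy | ≤ C t^{-n-L-1} ∫ |a(y)| ‖y - x₀‖^{L+1} dy. -/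
/-!
Subtract from `φ` its Taylor polynomial of order `L` at `z = t⁻¹ • (x - x₀)`, evaluated at the
increment `t⁻¹ • (x - y) - z = -t⁻¹ • (y - x₀)`. Its degree-`k` term is a `k`-linear form in
`y - x₀`, hence a combination of the monomials `∏ i, (y i - x₀ i) ^ β i` with `∑ i, β i = k ≤ L`,
so the moment conditions kill its integral against `a`. What is left is the Taylor remainder,
bounded by `‖t⁻¹ • (y - x₀)‖ ^ (L + 1) / L!`, which gives the estimate with `C = 1 / L!`.
-/

open MeasureTheory Finset Set

section Taylor

variable {E F : Type*} [NormedAddCommGroup E] [NormedSpace ℝ E]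
  [NormedAddCommGroup F] [NormedSpace ℝ F]

theorem iteratedDeriv_comp_add_smul {k : ℕ} {f : E → F} (hf : ContDiff ℝ k f) (z h : E)
    (s : ℝ) :
    iteratedDeriv k (fun s : ℝ => f (z + s • h)) s =
      iteratedFDeriv ℝ k f (z + s • h) (fun _ => h) := by
  have hline : (fun s : ℝ => f (z + s • h)) =
      (fun v => f (z + v)) ∘ (ContinuousLinearMap.id ℝ ℝ).smulRight h := by
    ext s; simp
  have hshift : ContDiff ℝ k (fun v => f (z + v)) := hf.comp (contDiff_const.add contDiff_id)
  rw [iteratedDeriv_eq_iteratedFDeriv, hline,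
    ContinuousLinearMap.iteratedFDeriv_comp_right _ hshift s le_rfl,
    ContinuousMultilinearMap.compContinuousLinearMap_apply, iteratedFDeriv_comp_add_left]
  simp

theorem norm_sub_sum_iteratedFDeriv_le {m : ℕ} {f : E → F} {C : ℝ}
    (hf : ContDiff ℝ (m + 1 : ℕ) f) (hC : ∀ x, ‖iteratedFDeriv ℝ (m + 1) f x‖ ≤ C) (z h : E) :
    ‖f (z + h) - ∑ k ∈ range (m + 1), (k.factorial : ℝ)⁻¹ • iteratedFDeriv ℝ k f z (fun _ => h)‖
      ≤ C * ‖h‖ ^ (m + 1) / m.factorial := by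
  set ψ : ℝ → F := fun s => f (z + s • h)
  have hψ : ContDiff ℝ (m + 1 : ℕ) ψ :=
    hf.comp (contDiff_const.add (contDiff_id.smul contDiff_const))
  have hderiv : ∀ k ≤ m + 1, ∀ s ∈ Icc (0 : ℝ) 1,
      iteratedDerivWithin k ψ (Icc 0 1) s = iteratedFDeriv ℝ k f (z + s • h) (fun _ => h) := by
    intro k hk s hs
    rw [iteratedDerivWithin_eq_iteratedDeriv (uniqueDiffOn_Icc one_pos)
        (hψ.of_le (by exact_mod_cast hk)).contDiffAt hs,
      iteratedDeriv_comp_add_smul (hf.of_le (by exact_mod_cast hk))]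
  have hbound : ∀ s ∈ Icc (0 : ℝ) 1,
      ‖iteratedDerivWithin (m + 1) ψ (Icc 0 1) s‖ ≤ C * ‖h‖ ^ (m + 1) := by
    intro s hs
    rw [hderiv _ le_rfl s hs]
    calc _ ≤ ‖iteratedFDeriv ℝ (m + 1) f (z + s • h)‖ * ∏ _ : Fin (m + 1), ‖h‖ :=
          ContinuousMultilinearMap.le_opNorm _ _
      _ ≤ C * ‖h‖ ^ (m + 1) := by
          rw [prod_const, card_univ, Fintype.card_fin]; gcongr; exact hC _
  have htaylor := taylor_mean_remainder_bound zero_le_one (mod_cast hψ.contDiffOn)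
    (right_mem_Icc.2 zero_le_one) hbound
  have hpoly : ∑ k ∈ range (m + 1),
        ((k.factorial : ℝ)⁻¹ * (1 - 0) ^ k) • iteratedDerivWithin k ψ (Icc 0 1) 0 =
      ∑ k ∈ range (m + 1), (k.factorial : ℝ)⁻¹ • iteratedFDeriv ℝ k f z (fun _ => h) := by
    refine sum_congr rfl fun k hk => ?_
    rw [hderiv k (mem_range.1 hk).le 0 (left_mem_Icc.2 zero_le_one)]
    simp
  rw [taylor_within_apply, hpoly] at htaylor
  simpa [ψ] using htaylor

theorem norm_sub_sum_iteratedFDeriv_dilate_le {L : ℕ} {φ : E → F}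
    (hφ : ContDiff ℝ (L + 1 : ℕ) φ) (hφ_bound : ∀ x, ‖iteratedFDeriv ℝ (L + 1) φ x‖ ≤ 1)
    {t : ℝ} (ht : 0 < t) (x x₀ y : E) :
    ‖φ (t⁻¹ • (x - y)) - ∑ k ∈ range (L + 1),
        (((k.factorial : ℝ)⁻¹ * (-t⁻¹) ^ k) • iteratedFDeriv ℝ k φ (t⁻¹ • (x - x₀)))
          (fun _ => y - x₀)‖ ≤
      (L.factorial : ℝ)⁻¹ * (t ^ (L + 1))⁻¹ * ‖y - x₀‖ ^ (L + 1) := by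
  have hsplit : t⁻¹ • (x - y) = t⁻¹ • (x - x₀) + (-t⁻¹) • (y - x₀) := by
    rw [neg_smul, ← sub_eq_add_neg, ← smul_sub]
    congr 1; abel
  have hpoly : ∑ k ∈ range (L + 1),
        (((k.factorial : ℝ)⁻¹ * (-t⁻¹) ^ k) • iteratedFDeriv ℝ k φ (t⁻¹ • (x - x₀)))
          (fun _ => y - x₀) =
      ∑ k ∈ range (L + 1), (k.factorial : ℝ)⁻¹ •
        iteratedFDeriv ℝ k φ (t⁻¹ • (x - x₀)) (fun _ => (-t⁻¹) • (y - x₀)) := by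
    refine sum_congr rfl fun k _ => ?_
    rw [smul_apply, mul_smul, ContinuousMultilinearMap.map_smul_univ,
      prod_const, card_univ, Fintype.card_fin]
  rw [hsplit, hpoly]
  convert norm_sub_sum_iteratedFDeriv_le hφ hφ_bound _ _ using 1
  simp only [neg_smul, norm_neg, norm_smul, norm_inv, Real.norm_eq_abs, abs_of_pos ht, mul_pow,
    inv_pow, one_mul]
  ring

end Taylor

theorem MultilinearMap.apply_diag_eq_sum_prod_pow {R E G ι κ : Type*} [CommSemiring R]
    [AddCommMonoid E] [Module R E] [AddCommMonoid G] [Module R G]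
    [Fintype ι] [DecidableEq ι] [Fintype κ] [DecidableEq κ]
    (M : MultilinearMap R (fun _ : κ => E) G) (b : Module.Basis ι R E) (v : E) :
    M (fun _ => v) = ∑ r : κ → ι, (∏ i, b.repr v i ^ #{j | r j = i}) • M (fun j => b (r j)) := by
  conv_lhs => rw [← b.sum_repr v]
  rw [M.map_sum]
  refine sum_congr rfl fun r _ => ?_
  rw [M.map_smul_univ, ← prod_fiberwise' univ r (b.repr v)]
  simp only [prod_const]

theorem abs_prod_pow_le_norm_pow {ι : Type*} [Fintype ι] (v : EuclideanSpace ℝ ι) (β : ι → ℕ) :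
    |∏ i, v i ^ β i| ≤ ‖v‖ ^ ∑ i, β i := by
  rw [abs_prod, ← prod_pow_eq_pow_sum]
  gcongr with i
  rw [abs_pow, ← Real.norm_eq_abs]
  gcongr
  exact PiLp.norm_apply_le v i

theorem pow_le_one_add_pow {x : ℝ} (hx : 0 ≤ x) {j m : ℕ} (hjm : j ≤ m) : x ^ j ≤ 1 + x ^ m := by
  rcases le_or_gt x 1 with hx1 | hx1
  · linarith [pow_le_one₀ hx hx1 (n := j), pow_nonneg hx m]
  · linarith [pow_le_pow_right₀ hx1.le hjm]

section Moments

variable {ι : Type*} [Fintype ι]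

def HasVanishingMoments (μ : Measure (EuclideanSpace ℝ ι)) (a : EuclideanSpace ℝ ι → ℝ)
    (x₀ : EuclideanSpace ℝ ι) (L : ℕ) : Prop :=
  ∀ β : ι → ℕ, ∑ i, β i ≤ L → ∫ y, a y * ∏ i, (y i - x₀ i) ^ β i ∂μ = 0

variable {L : ℕ} {μ : Measure (EuclideanSpace ℝ ι)} {a : EuclideanSpace ℝ ι → ℝ}
  {x₀ : EuclideanSpace ℝ ι}

theorem integrable_mul_prod_sub_pow (ha : Integrable a μ)
    (hint : Integrable (fun y => |a y| * ‖y - x₀‖ ^ (L + 1)) μ) {β : ι → ℕ}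
    (hβ : ∑ i, β i ≤ L + 1) :
    Integrable (fun y => a y * ∏ i, (y i - x₀ i) ^ β i) μ := by
  have hcont : Continuous fun y : EuclideanSpace ℝ ι => ∏ i, (y i - x₀ i) ^ β i := by
    fun_prop
  refine (ha.abs.add hint).mono' (ha.1.mul hcont.aestronglyMeasurable) (ae_of_all _ fun y => ?_)
  have hmono : |∏ i, (y i - x₀ i) ^ β i| ≤ 1 + ‖y - x₀‖ ^ (L + 1) :=
    (abs_prod_pow_le_norm_pow (y - x₀) β).trans (pow_le_one_add_pow (norm_nonneg _) hβ)
  rw [Real.norm_eq_abs, abs_mul]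
  calc |a y| * |∏ i, (y i - x₀ i) ^ β i| ≤ |a y| * (1 + ‖y - x₀‖ ^ (L + 1)) := by gcongr
    _ = |a y| + |a y| * ‖y - x₀‖ ^ (L + 1) := by ring

theorem HasVanishingMoments.integrable_and_integral_mul_apply_diag_eq_zero
    (hmom : HasVanishingMoments μ a x₀ L) (ha : Integrable a μ)
    (hint : Integrable (fun y => |a y| * ‖y - x₀‖ ^ (L + 1)) μ) {k : ℕ} (hk : k ≤ L)
    (M : ContinuousMultilinearMap ℝ (fun _ : Fin k => EuclideanSpace ℝ ι) ℝ) :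
    Integrable (fun y => a y * M (fun _ => y - x₀)) μ ∧
      ∫ y, a y * M (fun _ => y - x₀) ∂μ = 0 := by
  classical
  set β : (Fin k → ι) → ι → ℕ := fun r i => #{j | r j = i}
  have hβ (r : Fin k → ι) : ∑ i, β r i = k := by
    simp only [β, ← card_eq_sum_card_fiberwise (fun j _ => mem_univ (r j)), card_univ,
      Fintype.card_fin]
  have hexpand : (fun y => a y * M (fun _ => y - x₀)) = fun y => ∑ r : Fin k → ι,
      M (fun j => EuclideanSpace.single (r j) 1) * (a y * ∏ i, (y i - x₀ i) ^ β r i) := by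
    ext y
    have h := M.toMultilinearMap.apply_diag_eq_sum_prod_pow (EuclideanSpace.basisFun ι ℝ).toBasis
      (y - x₀)
    rw [ContinuousMultilinearMap.coe_coe] at h
    rw [h, mul_sum]
    refine sum_congr rfl fun r _ => ?_
    simp only [map_sub, Finsupp.coe_sub, Pi.sub_apply, OrthonormalBasis.coe_toBasis_repr_apply,
      EuclideanSpace.basisFun_repr, OrthonormalBasis.coe_toBasis, EuclideanSpace.basisFun_apply,
      smul_eq_mul]
    ring
  have hterm (r : Fin k → ι) :=
    integrable_mul_prod_sub_pow ha hint (β := β r) (by rw [hβ r]; omega)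
  rw [hexpand, integral_finsetSum _ fun r _ => (hterm r).const_mul _]
  refine ⟨integrable_finsetSum _ fun r _ => (hterm r).const_mul _, sum_eq_zero fun r _ => ?_⟩
  rw [integral_const_mul, hmom _ (by rw [hβ r]; exact hk), mul_zero]

theorem HasVanishingMoments.integrable_and_integral_mul_sum_apply_diag_eq_zero
    (hmom : HasVanishingMoments μ a x₀ L) (ha : Integrable a μ)
    (hint : Integrable (fun y => |a y| * ‖y - x₀‖ ^ (L + 1)) μ)
    (M : ∀ k : ℕ, ContinuousMultilinearMap ℝ (fun _ : Fin k => EuclideanSpace ℝ ι) ℝ) :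
    Integrable (fun y => a y * ∑ k ∈ range (L + 1), M k (fun _ => y - x₀)) μ ∧
      ∫ y, a y * ∑ k ∈ range (L + 1), M k (fun _ => y - x₀) ∂μ = 0 := by
  have hdeg (k) (hk : k ∈ range (L + 1)) :=
    hmom.integrable_and_integral_mul_apply_diag_eq_zero ha hint (mem_range_succ_iff.1 hk) (M k)
  simp only [mul_sum]
  rw [integral_finsetSum _ fun k hk => (hdeg k hk).1]
  exact ⟨integrable_finsetSum _ fun k hk => (hdeg k hk).1, sum_eq_zero fun k hk => (hdeg k hk).2⟩

end Moments

theorem abs_integral_mul_le_of_abs_sub_le {X : Type*} [MeasurableSpace X] {μ : Measure X}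
    {a f P g : X → ℝ} (haf : AEStronglyMeasurable (fun y => a y * f y) μ)
    (haP : Integrable (fun y => a y * P y) μ) (haP0 : ∫ y, a y * P y ∂μ = 0)
    (hag : Integrable (fun y => |a y| * g y) μ) (hfP : ∀ y, |f y - P y| ≤ g y) :
    |∫ y, a y * f y ∂μ| ≤ ∫ y, |a y| * g y ∂μ := by
  have hbound (y : X) : ‖a y * (f y - P y)‖ ≤ |a y| * g y := by
    rw [Real.norm_eq_abs, abs_mul]
    gcongr
    exact hfP y
  have hR : Integrable (fun y => a y * (f y - P y)) μ :=
    hag.mono' ((haf.sub haP.1).congr (ae_of_all _ fun y => by simp only [Pi.sub_apply]; ring))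
      (ae_of_all _ hbound)
  have hsplit : (fun y => a y * f y) = fun y => a y * P y + a y * (f y - P y) := by
    ext y; ring
  rw [hsplit, integral_add haP hR, haP0, zero_add, ← Real.norm_eq_abs]
  exact norm_integral_le_of_norm_le hag (ae_of_all _ hbound)

theorem stmt17 (n L : ℕ) :
    ∃ C : ℝ, 0 < C ∧
      ∀ (φ : EuclideanSpace ℝ (Fin n) → ℝ), ContDiff ℝ (L + 1 : ℕ) φ →
        (∀ x, ‖iteratedFDeriv ℝ (L + 1) φ x‖ ≤ 1) →
        ∀ (a : EuclideanSpace ℝ (Fin n) → ℝ) (x₀ : EuclideanSpace ℝ (Fin n)),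
          Integrable a →
          (∀ β : Fin n → ℕ, (∑ i, β i) ≤ L →
            ∫ y, a y * ∏ i, (y i - x₀ i) ^ (β i) = 0) →
          Integrable (fun y => |a y| * ‖y - x₀‖ ^ (L + 1)) →
          ∀ t : ℝ, 0 < t → ∀ x : EuclideanSpace ℝ (Fin n),
            |(t ^ n)⁻¹ * ∫ y, a y * φ (t⁻¹ • (x - y))| ≤
              C * (t ^ (n + L + 1))⁻¹ * ∫ y, |a y| * ‖y - x₀‖ ^ (L + 1) := by
  refine ⟨(L.factorial : ℝ)⁻¹, by positivity, ?_⟩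
  intro φ hφ hφ_bound a x₀ ha hmom hint t ht x
  set K := (L.factorial : ℝ)⁻¹ * (t ^ (L + 1))⁻¹
  -- `M k` is the degree-`k` Taylor term of `φ` at `t⁻¹ • (x - x₀)`, as a form in `y - x₀`.
  set M := fun k => ((k.factorial : ℝ)⁻¹ * (-t⁻¹) ^ k) • iteratedFDeriv ℝ k φ (t⁻¹ • (x - x₀))
  obtain ⟨hM, hM0⟩ :=
    HasVanishingMoments.integrable_and_integral_mul_sum_apply_diag_eq_zero hmom ha hint M
  have hremainder (y) :
      |φ (t⁻¹ • (x - y)) - ∑ k ∈ range (L + 1), M k (fun _ => y - x₀)| ≤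
        K * ‖y - x₀‖ ^ (L + 1) := by
    simpa only [Real.norm_eq_abs] using
      norm_sub_sum_iteratedFDeriv_dilate_le hφ hφ_bound ht x x₀ y
  have hmeas : AEStronglyMeasurable (fun y => a y * φ (t⁻¹ • (x - y))) :=
    ha.1.mul (hφ.continuous.comp (by fun_prop)).aestronglyMeasurable
  have hint' : Integrable (fun y => |a y| * (K * ‖y - x₀‖ ^ (L + 1))) := by
    simpa only [mul_left_comm] using hint.const_mul K
  calc |(t ^ n)⁻¹ * ∫ y, a y * φ (t⁻¹ • (x - y))|
      = (t ^ n)⁻¹ * |∫ y, a y * φ (t⁻¹ • (x - y))| := by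
        rw [abs_mul, abs_of_pos (by positivity)]
    _ ≤ (t ^ n)⁻¹ * ∫ y, |a y| * (K * ‖y - x₀‖ ^ (L + 1)) := by
        gcongr
        exact abs_integral_mul_le_of_abs_sub_le hmeas hM hM0 hint' hremainder
    _ = (t ^ n)⁻¹ * (K * ∫ y, |a y| * ‖y - x₀‖ ^ (L + 1)) := by
        simp_rw [← integral_const_mul, mul_left_comm K]
    _ = _ := by ring
end
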